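/- With f and g as in the main theorem, for every integer n ≥ 14 and every r ∈ {4, 5, 6} with n - r - 3 ≥ 1: binom(r-1,2)·f(n-r) + r·g(n-r-2) + g(n-r-3) < f(n). -/

import Mathlib

/-- `g n = 10 ^ (n/5)` (real power). -/
noncomputable def g (n : ℕ) : ℝ := (10 : ℝ) ^ ((n : ℝ) / 5)

/-- The four-piece function `f` from the main theorem. -/
noncomputable def f (n : ℕ) : ℝ :=
  if n ≤ 8 then (n.choose 2 : ℝ)
  else if n ≤ 13 then
    ((n / 2).choose 2 : ℝ) * (((n + 1) / 2).choose 2 : ℝ)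
      - (((n / 2 : ℕ) : ℝ) - 1) * ((((n + 1) / 2 : ℕ) : ℝ) - 1) + 1
  else if n ≤ 30 then
    (10 : ℝ) ^ (((n : ℝ) - 1) / 5) + (((n : ℝ) + 144) / 30) * (6 : ℝ) ^ (((n : ℝ) - 6) / 5)
  else
    (10 : ℝ) ^ (((n : ℝ) - 1) / 5) + (((n : ℝ) - 1) / 5) * (6 : ℝ) ^ (((n : ℝ) - 6) / 5)

/-!
Put `α = 10^(1/5)` and `β = 6^(1/5)`, so that `g n = α ^ n` and, for `n ≥ 14`,
`f n = α^(n-1) + c_n β^(n-6)` with `c_n` equal to `(n+144)/30` or `(n-1)/5`.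
Let `m = n - r ≥ 8`. For `m ≤ 13` there are fifteen pairs `(r, m)`, each a numerical check.
For `m ≥ 14`, using `α ^ 5 = 10`, the `α`-terms of `f n` minus the left-hand side
leave `margin r * α^(m-6)` with `margin r > 0`, while the `β`-terms contribute at worst a
linear function of `m` times `β^(m-6)`. Bernoulli's inequality gives
`(α/β)^(j+8) ≥ 9/4 + j/5`, and this beats the linear term.
-/

lemma rpow_natCast_div_five {x : ℝ} (hx : 0 ≤ x) (k : ℕ) :
    x ^ ((k : ℝ) / 5) = (x ^ (5⁻¹ : ℝ)) ^ k := by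
  rw [← Real.rpow_mul_natCast hx, inv_mul_eq_div]

noncomputable def α : ℝ := 10 ^ (5⁻¹ : ℝ)

noncomputable def β : ℝ := 6 ^ (5⁻¹ : ℝ)

lemma α_pos : 0 < α := by unfold α; positivity

lemma β_pos : 0 < β := by unfold β; positivity

lemma α_pow_five : α ^ 5 = 10 := by
  unfold α; simpa using Real.rpow_inv_natCast_pow (x := 10) (by norm_num) (n := 5) (by norm_num)

lemma β_pow_five : β ^ 5 = 6 := by
  unfold β; simpa using Real.rpow_inv_natCast_pow (x := 6) (by norm_num) (n := 5) (by norm_num)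

lemma lt_α : 1.5848 < α := lt_of_pow_lt_pow_left₀ 5 α_pos.le (by rw [α_pow_five]; norm_num)

lemma α_lt : α < 1.5849 := lt_of_pow_lt_pow_left₀ 5 (by norm_num) (by rw [α_pow_five]; norm_num)

lemma lt_β : 1.4309 < β := lt_of_pow_lt_pow_left₀ 5 β_pos.le (by rw [β_pow_five]; norm_num)

lemma g_eq_pow (n : ℕ) : g n = α ^ n := rpow_natCast_div_five (by norm_num) n

lemma f_eq_of_fourteen_le {n : ℕ} (hn : 14 ≤ n) :
    f n = α ^ (n - 1) +
      (if n ≤ 30 then ((n : ℝ) + 144) / 30 else ((n : ℝ) - 1) / 5) * β ^ (n - 6) := by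
  have e10 : (10 : ℝ) ^ (((n : ℝ) - 1) / 5) = α ^ (n - 1) := by
    rw [α, ← rpow_natCast_div_five (by norm_num), Nat.cast_sub (by omega), Nat.cast_one]
  have e6 : (6 : ℝ) ^ (((n : ℝ) - 6) / 5) = β ^ (n - 6) := by
    rw [β, ← rpow_natCast_div_five (by norm_num), Nat.cast_sub (by omega), Nat.cast_ofNat]
  rw [f, if_neg (by omega), if_neg (by omega), e10, e6]
  split_ifs <;> rfl

lemma f_ge_of_fourteen_le {n : ℕ} (hn : 14 ≤ n) :
    α ^ (n - 1) + ((n : ℝ) - 1) / 5 * β ^ (n - 6) ≤ f n := by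
  rw [f_eq_of_fourteen_le hn]
  split_ifs with h
  · have : (n : ℝ) ≤ 30 := by exact_mod_cast h
    have : ((n : ℝ) - 1) / 5 ≤ ((n : ℝ) + 144) / 30 := by linarith
    have := β_pos
    gcongr
  · rfl

lemma f_le_of_fourteen_le {n : ℕ} (hn : 14 ≤ n) :
    f n ≤ α ^ (n - 1) + max (((n : ℝ) + 144) / 30) (((n : ℝ) - 1) / 5) * β ^ (n - 6) := by
  rw [f_eq_of_fourteen_le hn]
  have := β_pos
  split_ifs
  · gcongr; exact le_max_left _ _
  · gcongr; exact le_max_right _ _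

lemma α_div_β_pow_ge (j : ℕ) : 9 / 4 + (j : ℝ) / 5 ≤ (α / β) ^ (j + 8) := by
  have ht5 : (α / β) ^ 5 = 5 / 3 := by rw [div_pow, α_pow_five, β_pow_five]; norm_num
  have ht_pos : 0 < α / β := div_pos α_pos β_pos
  have ht8 : 9 / 4 ≤ (α / β) ^ 8 :=
    le_of_pow_le_pow_left₀ (n := 5) (by norm_num) (by positivity)
      (by rw [← pow_mul, mul_comm, pow_mul, ht5]; norm_num)
  have ht1 : 49 / 45 ≤ α / β :=
    le_of_pow_le_pow_left₀ (n := 5) (by norm_num) ht_pos.le (by rw [ht5]; norm_num)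
  have hj := one_add_mul_le_pow (a := α / β - 1) (by linarith) j
  rw [add_sub_cancel] at hj
  have hj0 : (0 : ℝ) ≤ j := j.cast_nonneg
  have hj1 : 0 ≤ 1 + j * (α / β - 1) := by nlinarith
  calc 9 / 4 + (j : ℝ) / 5 ≤ 9 / 4 * (1 + j * (α / β - 1)) := by nlinarith
    _ ≤ (α / β) ^ 8 * (α / β) ^ j := by gcongr
    _ = (α / β) ^ (j + 8) := by ring

lemma α_pow_ge_β_pow (j : ℕ) : (9 / 4 + (j : ℝ) / 5) * β ^ (j + 8) ≤ α ^ (j + 8) := by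
  have := α_div_β_pow_ge j
  rwa [div_pow, le_div_iff₀ (by have := β_pos; positivity)] at this

/-- By `α ^ 5 = 10`, `α^(m+r-1) - C(r-1,2) α^(m-1) - r α^(m-2) - α^(m-3) = margin r * α^(m-6)`. -/
noncomputable def margin (r : ℕ) : ℝ :=
  10 * α ^ r - 10 * ((r - 1).choose 2 : ℝ) - r * α ^ 4 - α ^ 3

lemma margin_pos {r : ℕ} (hr₄ : 4 ≤ r) (hr₆ : r ≤ 6) : 0 < margin r := by
  have h3 : α ^ 3 < 1.5849 ^ 3 := pow_lt_pow_left₀ α_lt α_pos.le (by norm_num)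
  have h4 : α ^ 4 < 1.5849 ^ 4 := pow_lt_pow_left₀ α_lt α_pos.le (by norm_num)
  have h4' : 1.5848 ^ 4 < α ^ 4 := pow_lt_pow_left₀ lt_α (by norm_num) (by norm_num)
  interval_cases r <;> norm_num [margin, Nat.choose] at *
  · linarith
  · rw [α_pow_five]; linarith
  · rw [show α ^ 6 = α ^ 5 * α by ring, α_pow_five]; linarith [lt_α]

lemma coeff_lt_margin_mul {r : ℕ} (hr₄ : 4 ≤ r) (hr₆ : r ≤ 6) {x : ℝ} (hx : 14 ≤ x) :
    ((r - 1).choose 2 : ℝ) * max ((x + 144) / 30) ((x - 1) / 5) - (x + r - 1) / 5 * β ^ r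
      < margin r * (9 / 4 + (x - 14) / 5) := by
  have h3 : α ^ 3 < 1.5849 ^ 3 := pow_lt_pow_left₀ α_lt α_pos.le (by norm_num)
  have h4 : α ^ 4 < 1.5849 ^ 4 := pow_lt_pow_left₀ α_lt α_pos.le (by norm_num)
  have h4' : 1.5848 ^ 4 < α ^ 4 := pow_lt_pow_left₀ lt_α (by norm_num) (by norm_num)
  have hβ4 : 1.4309 ^ 4 < β ^ 4 := pow_lt_pow_left₀ lt_β (by norm_num) (by norm_num)
  have α6 : α ^ 6 = 10 * α := by rw [pow_succ, α_pow_five]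
  have β6 : β ^ 6 = 6 * β := by rw [pow_succ, β_pow_five]
  rcases max_cases ((x + 144) / 30) ((x - 1) / 5) with ⟨h, _⟩ | ⟨h, _⟩ <;> rw [h] <;>
    interval_cases r <;> simp only [margin, α6, β6, α_pow_five, β_pow_five] <;>
    norm_num [Nat.choose] at *
  all_goals nlinarith [lt_α, lt_β]

lemma pendant_bound_lt_of_le_thirteen {m r : ℕ} (hr₄ : 4 ≤ r) (hr₆ : r ≤ 6)
    (hn : 14 ≤ m + r) (hm : m ≤ 13) :
    ((r - 1).choose 2 : ℝ) * f m + r * α ^ (m - 2) + α ^ (m - 3) < f (m + r) := by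
  have h2 : α ^ (m - 2) ≤ 1.5849 ^ (m - 2) := pow_le_pow_left₀ α_pos.le α_lt.le _
  have h3 : α ^ (m - 3) ≤ 1.5849 ^ (m - 3) := pow_le_pow_left₀ α_pos.le α_lt.le _
  have h1 : 1.5848 ^ (m + r - 1) ≤ α ^ (m + r - 1) := pow_le_pow_left₀ (by norm_num) lt_α.le _
  have h6 : 1.4309 ^ (m + r - 6) ≤ β ^ (m + r - 6) := pow_le_pow_left₀ (by norm_num) lt_β.le _
  rw [f_eq_of_fourteen_le hn, if_pos (by omega)]
  have hm' : 14 - r ≤ m := by omega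
  interval_cases r <;> interval_cases m <;> norm_num [f, Nat.choose] at * <;> linarith

lemma pendant_bound_lt_of_fourteen_le {m r : ℕ} (hm : 14 ≤ m) (hr₄ : 4 ≤ r) (hr₆ : r ≤ 6) :
    ((r - 1).choose 2 : ℝ) *
          (α ^ (m - 1) + max (((m : ℝ) + 144) / 30) (((m : ℝ) - 1) / 5) * β ^ (m - 6)) +
        r * α ^ (m - 2) + α ^ (m - 3)
      < α ^ (m + r - 1) + (((m + r : ℕ) : ℝ) - 1) / 5 * β ^ (m + r - 6) := by
  obtain ⟨j, rfl⟩ : ∃ j, m = j + 14 := ⟨m - 14, by omega⟩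
  rw [show j + 14 - 1 = j + 8 + 5 by omega, show j + 14 - 2 = j + 8 + 4 by omega,
    show j + 14 - 3 = j + 8 + 3 by omega, show j + 14 - 6 = j + 8 by omega,
    show j + 14 + r - 1 = j + 8 + (r + 5) by omega, show j + 14 + r - 6 = j + 8 + r by omega]
  simp only [pow_add α (j + 8), pow_add β (j + 8), pow_add α r, α_pow_five]
  have hA := α_pow_ge_β_pow j
  have hB : 0 < β ^ (j + 8) := pow_pos β_pos _
  have hδ := margin_pos hr₄ hr₆
  have hc := coeff_lt_margin_mul hr₄ hr₆ (x := (j : ℝ) + 14) (by linarith [j.cast_nonneg (α := ℝ)])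
  push_cast at hc ⊢
  unfold margin at *
  nlinarith [mul_le_mul_of_nonneg_left hA hδ.le, mul_lt_mul_of_pos_right hc hB]

theorem ineq_pendant_two_general (n r : ℕ) (hn : 14 ≤ n) (hr : r ∈ ({4, 5, 6} : Set ℕ)) :
    ((r - 1).choose 2 : ℝ) * f (n - r) + (r : ℝ) * g (n - r - 2) + g (n - r - 3)
      < f n := by
  have ⟨hr₄, hr₆⟩ : 4 ≤ r ∧ r ≤ 6 := by
    simp only [Set.mem_insert_iff, Set.mem_singleton_iff] at hr; omega
  obtain ⟨m, rfl⟩ : ∃ m, n = m + r := ⟨n - r, by omega⟩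
  rw [Nat.add_sub_cancel, g_eq_pow, g_eq_pow]
  rcases le_or_gt m 13 with hm | hm
  · exact pendant_bound_lt_of_le_thirteen hr₄ hr₆ hn hm
  · have := β_pos
    calc _ ≤ ((r - 1).choose 2 : ℝ) *
              (α ^ (m - 1) + max (((m : ℝ) + 144) / 30) (((m : ℝ) - 1) / 5) * β ^ (m - 6)) +
            r * α ^ (m - 2) + α ^ (m - 3) := by gcongr; exact f_le_of_fourteen_le hm
      _ < α ^ (m + r - 1) + (((m + r : ℕ) : ℝ) - 1) / 5 * β ^ (m + r - 6) :=
        pendant_bound_lt_of_fourteen_le hm hr₄ hr₆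
      _ ≤ f (m + r) := f_ge_of_fourteen_le hn

theorem ineq_pendant_two (n r : ℕ) (hn : 14 ≤ n) (hr : r ∈ ({4, 5, 6} : Set ℕ))
    (h : 1 ≤ n - r - 3) :
    ((r - 1).choose 2 : ℝ) * f (n - r) + (r : ℝ) * g (n - r - 2) + g (n - r - 3)
      < f n :=
  ineq_pendant_two_general n r hn hr
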